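/- arXiv:1504.02947 — 4 statements merged into one kernel-verified Lean document; each statement's English description precedes it below -/
import Mathlib

section
/- Let G be a WGA, lmax ≥ 1, and let Δ' be the σ-successor transition relation on 𝓕, with upre(S) = {p' ∈ 𝓕 : ∀σ ∈ Σ, ∃q' ∈ S, (p',σ,q') ∈ Δ'}. Let S ⊆ 𝓕 be upward-closed and let f, g ∈ 𝓕 ∖ 𝒰. If f ∈ upre(S) and f ⪯ g, then g ∈ upre(S). -/
open scoped Classical

/-- A weighted game arena with partial observation. -/
structure WGA where
  Q : Type
  fintypeQ : Fintype Q
  qI : Q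
  A : Type
  fintypeA : Fintype A
  nonemptyA : Nonempty A
  Δ : Q → A → Q → Prop
  total : ∀ q a, ∃ q', Δ q a q'
  w : Q → A → Q → ℤ
  Obs : Set (Set Q)
  obs_empty : ∅ ∉ Obs
  obs_partition : ∀ q : Q, ∃! o, o ∈ Obs ∧ q ∈ o

attribute [instance] WGA.fintypeQ WGA.fintypeA WGA.nonemptyA

namespace WGA

variable (G : WGA)

/-- A concrete path compatible with the given sequences of observations and actions. -/
def Concretizes (obs : ℕ → Set G.Q) (act : ℕ → G.A) (π : ℕ → G.Q) : Prop :=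
  (∀ i, π i ∈ obs i) ∧ ∀ i, G.Δ (π i) (act i) (π (i + 1))

/-- Plays: infinite abstract paths starting at the initial observation. -/
def IsPlay (obs : ℕ → Set G.Q) (act : ℕ → G.A) : Prop :=
  (∀ i, obs i ∈ G.Obs) ∧ G.qI ∈ obs 0 ∧ ∃ π, G.Concretizes obs act π

/-- Sum of the `j` transition weights starting at position `i`. -/
def winSum (π : ℕ → G.Q) (act : ℕ → G.A) (i j : ℕ) : ℤ :=
  ∑ k ∈ Finset.range j, G.w (π (i + k)) (act (i + k)) (π (i + k + 1))

/-- Good window at position `i` with window size bound `lmax`. -/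
def GW (ν : ℚ) (i lmax : ℕ) (π : ℕ → G.Q) (act : ℕ → G.A) : Prop :=
  ∃ j, 1 ≤ j ∧ j ≤ lmax ∧ ν ≤ (G.winSum π act i j : ℚ) / (j : ℚ)

def DirFix (ν : ℚ) (lmax : ℕ) (obs : ℕ → Set G.Q) (act : ℕ → G.A) : Prop :=
  ∀ π, G.Concretizes obs act π → ∀ i, G.GW ν i lmax π act

def UFix (ν : ℚ) (lmax : ℕ) (obs : ℕ → Set G.Q) (act : ℕ → G.A) : Prop :=
  ∃ i, ∀ π, G.Concretizes obs act π → ∀ j, i ≤ j → G.GW ν j lmax π act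

def Fix (ν : ℚ) (lmax : ℕ) (obs : ℕ → Set G.Q) (act : ℕ → G.A) : Prop :=
  ∀ π, G.Concretizes obs act π → ∃ i, ∀ j, i ≤ j → G.GW ν j lmax π act

def UDirBnd (ν : ℚ) (obs : ℕ → Set G.Q) (act : ℕ → G.A) : Prop :=
  ∃ lmax, 1 ≤ lmax ∧ ∀ π, G.Concretizes obs act π → ∀ i, G.GW ν i lmax π act

def DirBnd (ν : ℚ) (obs : ℕ → Set G.Q) (act : ℕ → G.A) : Prop :=
  ∀ π, G.Concretizes obs act π → ∃ lmax, 1 ≤ lmax ∧ ∀ i, G.GW ν i lmax π act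

def UBnd (ν : ℚ) (obs : ℕ → Set G.Q) (act : ℕ → G.A) : Prop :=
  ∃ lmax, 1 ≤ lmax ∧ ∃ i, ∀ π, G.Concretizes obs act π → ∀ j, i ≤ j → G.GW ν j lmax π act

def Bnd (ν : ℚ) (obs : ℕ → Set G.Q) (act : ℕ → G.A) : Prop :=
  ∀ π, G.Concretizes obs act π → ∃ lmax, 1 ≤ lmax ∧ ∃ i, ∀ j, i ≤ j → G.GW ν j lmax π act

noncomputable def MPinf (π : ℕ → G.Q) (act : ℕ → G.A) : ℝ :=
  Filter.liminf (fun n : ℕ => (G.winSum π act 0 n : ℝ) / (n : ℝ)) Filter.atTop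

noncomputable def MPsup (π : ℕ → G.Q) (act : ℕ → G.A) : ℝ :=
  Filter.limsup (fun n : ℕ => (G.winSum π act 0 n : ℝ) / (n : ℝ)) Filter.atTop

def MPInfObj (ν : ℚ) (obs : ℕ → Set G.Q) (act : ℕ → G.A) : Prop :=
  ∀ π, G.Concretizes obs act π → (ν : ℝ) ≤ G.MPinf π act

def MPSupObj (ν : ℚ) (obs : ℕ → Set G.Q) (act : ℕ → G.A) : Prop :=
  ∀ π, G.Concretizes obs act π → (ν : ℝ) ≤ G.MPsup π act

/-- The finite history (prefix) of a play after `n` steps, ending with `obs n`. -/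
def hist (obs : ℕ → Set G.Q) (act : ℕ → G.A) (n : ℕ) : List (Set G.Q × G.A) :=
  (List.range n).map fun i => (obs i, act i)

/-- A play is consistent with an observation-based strategy of Eve. -/
def Consistent (str : List (Set G.Q × G.A) → Set G.Q → G.A)
    (obs : ℕ → Set G.Q) (act : ℕ → G.A) : Prop :=
  ∀ n, act n = str (G.hist obs act n) (obs n)

/-- Eve wins an objective if some observation-based strategy forces it on all plays. -/
def Wins (V : (ℕ → Set G.Q) → (ℕ → G.A) → Prop) : Prop :=
  ∃ str : List (Set G.Q × G.A) → Set G.Q → G.A,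
    ∀ obs act, G.IsPlay obs act → G.Consistent str obs act → V obs act

/-- σ-successors of a set of states. -/
def postSet (σ : G.A) (s : Set G.Q) : Set G.Q := {q' | ∃ q ∈ s, G.Δ q σ q'}

end WGA

namespace WGA

variable (G : WGA)

/-- Elements of the function space 𝓕 (validity constraints are given by `ValidF`). -/
def FMap := G.Q → Option (ℕ → ℤ)

/-- The support of an element of 𝓕. -/
def fsupp (f : FMap G) : Set G.Q := {q | f q ≠ none}

/-- `f(q)_i`, the value of `f` at state `q` and window index `i`. -/
def fval (f : FMap G) (q : G.Q) (i : ℕ) : ℤ := ((f q).getD fun _ => 0) i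

/-- Membership in 𝓕: values at indices `1,…,lmax` lie in `{−W·lmax,…,0}`
(values at other indices are normalized to `0`). -/
def ValidF (lmax W : ℕ) (f : FMap G) : Prop :=
  ∀ q g, f q = some g →
    (∀ i, 1 ≤ i → i ≤ lmax → -((W : ℤ) * (lmax : ℤ)) ≤ g i ∧ g i ≤ 0) ∧
    (∀ i, i = 0 ∨ lmax < i → g i = 0)

def Fset (lmax W : ℕ) : Set (FMap G) := {f | G.ValidF lmax W f}

/-- The set whose minimum is `ζ(q)` in the definition of σ-successor. -/
def zetaSet (f1 : FMap G) (σ : G.A) (q : G.Q) (j : ℕ) : Set ℤ :=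
  if j = 1 then {x | ∃ p ∈ G.fsupp f1, G.Δ p σ q ∧ x = G.w p σ q}
  else {x | ∃ p ∈ G.fsupp f1, G.Δ p σ q ∧ G.fval f1 p (j - 1) < 0 ∧
        x = G.fval f1 p (j - 1) + G.w p σ q}

/-- `v = max(−W·lmax, min(0, min Z))`, where the minimum of the empty set is `+∞`. -/
def succVal (lmax W : ℕ) (Z : Set ℤ) (v : ℤ) : Prop :=
  (Z = ∅ ∧ v = max (-((W : ℤ) * (lmax : ℤ))) 0) ∨
  ∃ z, IsLeast Z z ∧ v = max (-((W : ℤ) * (lmax : ℤ))) (min 0 z)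

/-- `f2` is a σ-successor of `f1`. -/
def IsSucc (lmax W : ℕ) (f1 : FMap G) (σ : G.A) (f2 : FMap G) : Prop :=
  G.ValidF lmax W f2 ∧
  (∃ o ∈ G.Obs, G.fsupp f2 = G.postSet σ (G.fsupp f1) ∩ o) ∧
  ∀ q ∈ G.fsupp f2, ∀ j, 1 ≤ j → j ≤ lmax →
    succVal lmax W (G.zetaSet f1 σ q j) (G.fval f2 q j)

/-- The initial function `f_I`. -/
noncomputable def fI : FMap G := fun q => if q = G.qI then some (fun _ => 0) else none

/-- The unsafe set 𝒰 ⊆ 𝓕. -/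
def FU (lmax W : ℕ) : Set (FMap G) :=
  {f | G.ValidF lmax W f ∧ ∃ q ∈ G.fsupp f, G.fval f q lmax < 0}

/-- The partial order ⪯ on 𝓕. -/
def Preceq (lmax : ℕ) (f g : FMap G) : Prop :=
  G.fsupp f ⊆ G.fsupp g ∧
  ∀ q ∈ G.fsupp f, ∀ i, 1 ≤ i → i ≤ lmax →
    ∃ j, i ≤ j ∧ j ≤ lmax ∧ G.fval g q j ≤ G.fval f q i

/-- Upward-closedness (within 𝓕) with respect to ⪯. -/
def UpClosed (lmax W : ℕ) (S : Set (FMap G)) : Prop :=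
  ∀ f ∈ S, ∀ g ∈ G.Fset lmax W, G.Preceq lmax f g → g ∈ S

/-- Uncontrollable predecessors in the game `G'`. -/
def upreF (lmax W : ℕ) (S : Set (FMap G)) : Set (FMap G) :=
  {p | G.ValidF lmax W p ∧ ∀ σ : G.A, ∃ f2 ∈ S, G.IsSucc lmax W p σ f2}

/-- The set of ⪯-minimal elements of `T`. -/
def minimal (lmax : ℕ) (T : Set (FMap G)) : Set (FMap G) :=
  {x | x ∈ T ∧ ∀ y ∈ T, G.Preceq lmax y x → y = x}

/-- The antichain version ⌊upre⌋ of the uncontrollable-predecessors operator. -/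
def acUpre (lmax W : ℕ) (a : Set (FMap G)) : Set (FMap G) :=
  G.minimal lmax {p | G.ValidF lmax W p ∧ p ∉ G.FU lmax W ∧
    ∀ σ : G.A, ∃ q' ∈ a, ∃ r', G.IsSucc lmax W p σ r' ∧ G.Preceq lmax q' r'}

/-- Upward closure within 𝓕. -/
def upSet (lmax W : ℕ) (T : Set (FMap G)) : Set (FMap G) :=
  {g | g ∈ G.Fset lmax W ∧ ∃ f ∈ T, G.Preceq lmax f g}

/-- Histories of the perfect-information game `G'`. -/
def histP (fs : ℕ → FMap G) (act : ℕ → G.A) (n : ℕ) : List (FMap G × G.A) :=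
  (List.range n).map fun i => (fs i, act i)

/-- The given strategy of Eve is winning for the safety objective of `G'`:
every consistent play (a sequence of σ-successor moves from `f_I`) avoids 𝒰. -/
def WinsSafeP (lmax W : ℕ) (str : List (FMap G × G.A) → FMap G → G.A) : Prop :=
  ∀ fs : ℕ → FMap G, ∀ act : ℕ → G.A,
    fs 0 = G.fI →
    (∀ i, G.IsSucc lmax W (fs i) (act i) (fs (i + 1))) →
    (∀ n, act n = str (G.histP fs act n) (fs n)) →
    ∀ i, fs i ∉ G.FU lmax W

/-- The monotone map `X ↦ 𝒰 ∪ upre(X)` on the powerset lattice of 𝓕. -/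
def safeOp (lmax W : ℕ) : Set (FMap G) →o Set (FMap G) where
  toFun X := G.FU lmax W ∪ G.upreF lmax W X
  monotone' := by
    intro X Y hXY f hf
    rcases hf with hf | hf
    · exact Or.inl hf
    · refine Or.inr ⟨hf.1, fun σ => ?_⟩
      obtain ⟨f2, hf2, hs⟩ := hf.2 σ
      exact ⟨f2, hXY hf2, hs⟩

end WGA


/-!
Fix `σ` and let `f₂ ∈ S` be a `σ`-successor of `f`, with support `post_σ(supp f) ∩ o`. The
`σ`-successor `g₂` of `g` with support `post_σ(supp g) ∩ o` satisfies `f₂ ⪯ g₂`, so `g₂ ∈ S`.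
Supports grow because `post_σ` is monotone. Each candidate `f(p)_{i-1} + w(p,σ,q)` for `ζ(q)` at
index `i` is dominated, via `f ⪯ g` at `p`, by a candidate `g(p)_{j'} + w(p,σ,q)` at index
`j' + 1 ≥ i`; since `g ∉ 𝒰` and `g(p)_{j'} < 0`, we have `j' < lmax`, so `j' + 1` is a legal index.
-/

namespace WGA

variable (G : WGA)

lemma zetaSet_finite (f : FMap G) (σ : G.A) (q : G.Q) (j : ℕ) : (G.zetaSet f σ q j).Finite := by
  refine (Set.finite_range fun p : G.Q =>
    if j = 1 then G.w p σ q else G.fval f p (j - 1) + G.w p σ q).subset ?_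
  unfold zetaSet
  split_ifs
  · rintro x ⟨p, -, -, rfl⟩
    exact ⟨p, by simp⟩
  · rintro x ⟨p, -, -, -, rfl⟩
    exact ⟨p, by simp⟩

/-- Since `sInf ∅ = 0` in `ℤ`, this single formula also covers `ζ(q) = +∞`. -/
lemma succVal_sInf (lmax W : ℕ) {Z : Set ℤ} (hZ : Z.Finite) :
    succVal lmax W Z (max (-((W : ℤ) * (lmax : ℤ))) (min 0 (sInf Z))) := by
  rcases Z.eq_empty_or_nonempty with rfl | hne
  · exact Or.inl ⟨rfl, by rw [Int.csInf_empty, min_self]⟩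
  · exact Or.inr ⟨sInf Z, ⟨hne.csInf_mem hZ, fun _ hx => csInf_le hZ.bddBelow hx⟩, rfl⟩

lemma postSet_mono (σ : G.A) {s t : Set G.Q} (h : s ⊆ t) : G.postSet σ s ⊆ G.postSet σ t := by
  rintro q ⟨p, hp, hΔ⟩
  exact ⟨p, h hp, hΔ⟩

lemma fval_nonneg_of_notMem_FU {lmax W : ℕ} {g : FMap G} (hg : g ∈ G.Fset lmax W)
    (hgU : g ∉ G.FU lmax W) {p : G.Q} (hp : p ∈ G.fsupp g) : 0 ≤ G.fval g p lmax :=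
  not_lt.mp fun hneg => hgU ⟨hg, p, hp, hneg⟩

lemma exists_mem_zetaSet_le {lmax : ℕ} {f g : FMap G} (hfg : G.Preceq lmax f g)
    (hg : ∀ p ∈ G.fsupp g, 0 ≤ G.fval g p lmax) {σ : G.A} {q : G.Q} {i : ℕ}
    (hi₁ : 1 ≤ i) (hi : i ≤ lmax) {z : ℤ} (hz : z ∈ G.zetaSet f σ q i) :
    ∃ j, i ≤ j ∧ j ≤ lmax ∧ ∃ z' ∈ G.zetaSet g σ q j, z' ≤ z := by
  unfold zetaSet at hz
  split_ifs at hz with hi_eq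
  · obtain ⟨p, hp, hΔ, rfl⟩ := hz
    refine ⟨i, le_rfl, hi, G.w p σ q, ?_, le_rfl⟩
    simp only [zetaSet, if_pos hi_eq]
    exact ⟨p, hfg.1 hp, hΔ, rfl⟩
  · obtain ⟨p, hp, hΔ, hneg, rfl⟩ := hz
    obtain ⟨j, hij, hj, hle⟩ := hfg.2 p hp (i - 1) (by omega) (by omega)
    have hgneg : G.fval g p j < 0 := hle.trans_lt hneg
    have hj_lt : j < lmax := lt_of_le_of_ne hj fun h => (hg p (hfg.1 hp)).not_gt (h ▸ hgneg)
    refine ⟨j + 1, by omega, hj_lt, G.fval g p j + G.w p σ q, ?_, by omega⟩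
    simp only [zetaSet, if_neg (show j + 1 ≠ 1 by omega), Nat.add_sub_cancel]
    exact ⟨p, hfg.1 hp, hΔ, hgneg, rfl⟩

noncomputable def canonSucc (lmax W : ℕ) (g : FMap G) (σ : G.A) (o : Set G.Q) : FMap G :=
  fun q => if q ∈ G.postSet σ (G.fsupp g) ∩ o then
    some fun j => if 1 ≤ j ∧ j ≤ lmax then
      max (-((W : ℤ) * (lmax : ℤ))) (min 0 (sInf (G.zetaSet g σ q j))) else 0
  else none

variable {G}

lemma fsupp_canonSucc (lmax W : ℕ) (g : FMap G) (σ : G.A) (o : Set G.Q) :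
    G.fsupp (G.canonSucc lmax W g σ o) = G.postSet σ (G.fsupp g) ∩ o := by
  ext q
  simp [fsupp, canonSucc]

lemma fval_canonSucc {lmax W : ℕ} {g : FMap G} {σ : G.A} {o : Set G.Q} {q : G.Q}
    (hq : q ∈ G.postSet σ (G.fsupp g) ∩ o) {j : ℕ} (hj₁ : 1 ≤ j) (hj : j ≤ lmax) :
    G.fval (G.canonSucc lmax W g σ o) q j =
      max (-((W : ℤ) * (lmax : ℤ))) (min 0 (sInf (G.zetaSet g σ q j))) := by
  simp [fval, canonSucc, hq, hj₁, hj]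

lemma canonSucc_mem_Fset (lmax W : ℕ) (g : FMap G) (σ : G.A) (o : Set G.Q) :
    G.canonSucc lmax W g σ o ∈ G.Fset lmax W := by
  intro q v hv
  simp only [canonSucc] at hv
  split_ifs at hv
  cases hv
  refine ⟨fun i hi₁ hi => ?_, fun i hi => ?_⟩
  · simp only [if_pos (And.intro hi₁ hi)]
    exact ⟨le_max_left _ _, max_le (neg_nonpos.mpr (by positivity)) (min_le_left _ _)⟩
  · simp only [if_neg (show ¬(1 ≤ i ∧ i ≤ lmax) by omega)]

lemma isSucc_canonSucc {lmax W : ℕ} (g : FMap G) (σ : G.A) {o : Set G.Q} (ho : o ∈ G.Obs) :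
    G.IsSucc lmax W g σ (G.canonSucc lmax W g σ o) := by
  refine ⟨canonSucc_mem_Fset lmax W g σ o, ⟨o, ho, fsupp_canonSucc lmax W g σ o⟩,
    fun q hq j hj₁ hj => ?_⟩
  rw [fsupp_canonSucc] at hq
  rw [fval_canonSucc hq hj₁ hj]
  exact succVal_sInf lmax W (G.zetaSet_finite g σ q j)

lemma preceq_canonSucc {lmax W : ℕ} {f g f₂ : FMap G} (hfg : G.Preceq lmax f g)
    (hg : ∀ p ∈ G.fsupp g, 0 ≤ G.fval g p lmax) {σ : G.A} {o : Set G.Q}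
    (hf₂ : G.IsSucc lmax W f σ f₂) (ho : G.fsupp f₂ = G.postSet σ (G.fsupp f) ∩ o) :
    G.Preceq lmax f₂ (G.canonSucc lmax W g σ o) := by
  have hsupp : G.fsupp f₂ ⊆ G.postSet σ (G.fsupp g) ∩ o :=
    ho ▸ Set.inter_subset_inter_left o (G.postSet_mono σ hfg.1)
  refine ⟨(fsupp_canonSucc lmax W g σ o).symm ▸ hsupp, fun q hq i hi₁ hi => ?_⟩
  rcases hf₂.2.2 q hq i hi₁ hi with ⟨-, hv⟩ | ⟨z, hz, hv⟩
  · refine ⟨i, le_rfl, hi, ?_⟩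
    rw [fval_canonSucc (hsupp hq) hi₁ hi, hv]
    exact max_le_max le_rfl (min_le_left _ _)
  · obtain ⟨j, hij, hj, z', hz', hz'z⟩ := G.exists_mem_zetaSet_le hfg hg hi₁ hi hz.1
    refine ⟨j, hij, hj, ?_⟩
    rw [fval_canonSucc (hsupp hq) (hi₁.trans hij) hj, hv]
    have hsInf : sInf (G.zetaSet g σ q j) ≤ z :=
      (csInf_le (G.zetaSet_finite g σ q j).bddBelow hz').trans hz'z
    exact max_le_max le_rfl (min_le_min le_rfl hsInf)

end WGA

theorem upre_is_uc_general (G : WGA) (lmax W : ℕ)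
    (S : Set (WGA.FMap G)) (hUC : G.UpClosed lmax W S)
    (f g : WGA.FMap G)
    (hg : g ∈ G.Fset lmax W)
    (hgU : g ∉ G.FU lmax W)
    (hup : f ∈ G.upreF lmax W S) (hpre : G.Preceq lmax f g) :
    g ∈ G.upreF lmax W S := by
  refine ⟨hg, fun σ => ?_⟩
  obtain ⟨f₂, hf₂S, hf₂⟩ := hup.2 σ
  obtain ⟨o, ho, hsupp⟩ := hf₂.2.1
  have hg_safe : ∀ p ∈ G.fsupp g, 0 ≤ G.fval g p lmax := fun p hp =>
    G.fval_nonneg_of_notMem_FU hg hgU hp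
  exact ⟨G.canonSucc lmax W g σ o,
    hUC f₂ hf₂S _ (WGA.canonSucc_mem_Fset lmax W g σ o)
      (WGA.preceq_canonSucc hpre hg_safe hf₂ hsupp),
    WGA.isSucc_canonSucc g σ ho⟩

/-- Lemma 8: outside of 𝒰, the `upre` operator preserves upward-closedness:
if `S` is upward-closed, `f, g ∈ 𝓕 ∖ 𝒰`, `f ∈ upre(S)` and `f ⪯ g`, then `g ∈ upre(S)`. -/
theorem upre_is_uc (G : WGA) (lmax W : ℕ) (hlmax : 1 ≤ lmax)
    (hW : ∀ p σ q, G.Δ p σ q → |G.w p σ q| ≤ (W : ℤ))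
    (S : Set (WGA.FMap G)) (hS : S ⊆ G.Fset lmax W) (hUC : G.UpClosed lmax W S)
    (f g : WGA.FMap G)
    (hf : f ∈ G.Fset lmax W) (hg : g ∈ G.Fset lmax W)
    (hfU : f ∉ G.FU lmax W) (hgU : g ∉ G.FU lmax W)
    (hup : f ∈ G.upreF lmax W S) (hpre : G.Preceq lmax f g) :
    g ∈ G.upreF lmax W S :=
  upre_is_uc_general G lmax W S hUC f g hg hgU hup hpre
end

section
/- Consider the perfect-information WGA G with states Q = {q_0, q_1}, initial state q_0, a single action a, observations {q_0} and {q_1}, and transitions (q_0,a,q_1) of weight −1, (q_1,a,q_0) of weight +1, and (q_1,a,q_1) of weight 0, and take lmax = 2 (so W = 1 and values range over {−2,…,0}). Then the set upre(𝒰) ⊆ 𝓕 is NOT upward-closed with respect to the partial order ⪯: there exist f, g ∈ 𝓕 with f ⪯ g, f ∈ upre(𝒰) and g ∉ upre(𝒰). -/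
open scoped Classical

/-- The perfect-information WGA of Figure 4: states `q₀ = false`, `q₁ = true`, a single
action, transitions `q₀ →(−1) q₁`, `q₁ →(+1) q₀`, `q₁ →0 q₁`, singleton observations. -/
def G3 : WGA where
  Q := Bool
  fintypeQ := inferInstance
  qI := false
  A := Unit
  fintypeA := inferInstance
  nonemptyA := inferInstance
  Δ := fun q _ q' => ¬(q = false ∧ q' = false)
  total := fun _ _ => ⟨true, by simp⟩
  w := fun q _ q' => if q = false then (-1 : ℤ) else if q' = false then 1 else 0
  Obs := {{false}, {true}}
  obs_empty := by
    intro h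
    simp only [Set.mem_insert_iff, Set.mem_singleton_iff] at h
    rcases h with h | h
    · exact Set.singleton_ne_empty false h.symm
    · exact Set.singleton_ne_empty true h.symm
  obs_partition := by
    intro q
    cases q
    · refine ⟨{false}, ⟨Or.inl rfl, rfl⟩, ?_⟩
      rintro o ⟨ho, hq⟩
      simp only [Set.mem_insert_iff, Set.mem_singleton_iff] at ho
      rcases ho with rfl | rfl
      · rfl
      · simp only [Set.mem_singleton_iff] at hq
        exact absurd hq (by decide)
    · refine ⟨{true}, ⟨Or.inr rfl, rfl⟩, ?_⟩
      rintro o ⟨ho, hq⟩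
      simp only [Set.mem_insert_iff, Set.mem_singleton_iff] at ho
      rcases ho with rfl | rfl
      · simp only [Set.mem_singleton_iff] at hq
        exact absurd hq (by decide)
      · rfl

/-
Let `f` and `g` be supported on `q₁` alone, with windows `f(q₁) = (−1, −1)` and
`g(q₁) = (0, −1)`; then `f ⪯ g` since `g(q₁)₂ = −1` lies below both entries of `f(q₁)`.
The only `a`-move from `q₁` observed inside `{q₁}` is the `0`-loop, so the successor of `f`
shifts its windows to `(0, f(q₁)₁) = (0, −1)`, i.e. it is `g`, which is unsafe. The successor
of `g` instead gets second window `0`: only *open* (negative) windows are extended, and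
`g(q₁)₁ = 0` is closed. So every successor of `g` is safe, although `g ⪰ f`.
-/

namespace WGA

variable {G : WGA}

noncomputable def FMap.single (q : G.Q) (v : ℕ → ℤ) : G.FMap :=
  fun p => if p = q then some v else none

section Single

variable {q : G.Q} {v : ℕ → ℤ}

@[simp]
lemma fsupp_single : G.fsupp (FMap.single q v) = {q} := by
  ext p
  by_cases hp : p = q <;> simp [fsupp, FMap.single, hp]

@[simp]
lemma fval_single_self (i : ℕ) : G.fval (FMap.single q v) q i = v i := by
  simp [fval, FMap.single]

lemma validF_single {lmax W : ℕ}
    (hrange : ∀ i, 1 ≤ i → i ≤ lmax → -((W : ℤ) * (lmax : ℤ)) ≤ v i ∧ v i ≤ 0)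
    (hout : ∀ i, i = 0 ∨ lmax < i → v i = 0) :
    G.ValidF lmax W (FMap.single q v) := by
  intro p u hu
  by_cases hp : p = q
  · simp only [FMap.single, hp, if_true, Option.some.injEq] at hu
    exact hu ▸ ⟨hrange, hout⟩
  · simp [FMap.single, hp] at hu

lemma preceq_single_of_last_le {lmax : ℕ} {u : ℕ → ℤ}
    (h : ∀ i, 1 ≤ i → i ≤ lmax → v lmax ≤ u i) :
    G.Preceq lmax (FMap.single q u) (FMap.single q v) := by
  refine ⟨by simp, fun p hp i hi hil => ?_⟩
  rw [fsupp_single, Set.mem_singleton_iff] at hp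
  subst hp
  exact ⟨lmax, hil, le_rfl, by simpa using h i hi hil⟩

variable {p : G.Q} {σ : G.A}

lemma zetaSet_single_one (hΔ : G.Δ p σ q) :
    G.zetaSet (FMap.single p v) σ q 1 = {G.w p σ q} := by
  ext x
  simp [zetaSet, hΔ]

lemma zetaSet_single_of_neg {j : ℕ} (hj : j ≠ 1) (hΔ : G.Δ p σ q) (hv : v (j - 1) < 0) :
    G.zetaSet (FMap.single p v) σ q j = {v (j - 1) + G.w p σ q} := by
  ext x
  simp [zetaSet, hj, hΔ, hv]

end Single

lemma zetaSet_eq_empty_of_nonneg {f : G.FMap} {σ : G.A} {q : G.Q} {j : ℕ} (hj : j ≠ 1)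
    (hf : ∀ p ∈ G.fsupp f, 0 ≤ G.fval f p (j - 1)) : G.zetaSet f σ q j = ∅ := by
  ext x
  simp only [zetaSet, hj, if_false, Set.mem_empty_iff_false, iff_false]
  rintro ⟨p, hp, -, hneg, -⟩
  exact (hf p hp).not_gt hneg

lemma succVal_empty_iff {lmax W : ℕ} {v : ℤ} : succVal lmax W ∅ v ↔ v = 0 := by
  have hWl : -((W : ℤ) * (lmax : ℤ)) ≤ 0 := by simp only [neg_nonpos]; positivity
  constructor
  · rintro (⟨-, rfl⟩ | ⟨z, hz, -⟩)
    · exact max_eq_right hWl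
    · exact absurd hz.1 (Set.notMem_empty z)
  · rintro rfl
    exact Or.inl ⟨rfl, (max_eq_right hWl).symm⟩

lemma succVal_singleton {lmax W : ℕ} {z : ℤ} (hlo : -((W : ℤ) * (lmax : ℤ)) ≤ z)
    (hhi : z ≤ 0) : succVal lmax W {z} z :=
  Or.inr ⟨z, isLeast_singleton, by rw [min_eq_right hhi, max_eq_right hlo]⟩

lemma IsSucc.notMem_FU {lmax W : ℕ} (hl : 2 ≤ lmax) {f f' : G.FMap} {σ : G.A}
    (hf : ∀ p ∈ G.fsupp f, 0 ≤ G.fval f p (lmax - 1)) (hs : G.IsSucc lmax W f σ f') :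
    f' ∉ G.FU lmax W := by
  rintro ⟨-, q, hq, hneg⟩
  have hval := hs.2.2 q hq lmax (by omega) le_rfl
  rw [zetaSet_eq_empty_of_nonneg (by omega) hf, succVal_empty_iff] at hval
  exact hneg.ne hval

lemma notMem_upreF_FU {lmax W : ℕ} (hl : 2 ≤ lmax) {f : G.FMap}
    (hf : ∀ p ∈ G.fsupp f, 0 ≤ G.fval f p (lmax - 1)) :
    f ∉ G.upreF lmax W (G.FU lmax W) := by
  rintro ⟨-, hpre⟩
  obtain ⟨f', hf'U, hs⟩ := hpre (Classical.arbitrary G.A)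
  exact hs.notMem_FU hl hf hf'U

end WGA

namespace G3

open WGA

abbrev q₁ : G3.Q := true

def openWindows : ℕ → ℤ := fun i => if i = 1 ∨ i = 2 then -1 else 0

def shiftedWindows : ℕ → ℤ := fun i => if i = 2 then -1 else 0

lemma validF_single_openWindows : G3.ValidF 2 1 (FMap.single q₁ openWindows) := by
  refine validF_single (fun i hi hi2 => ?_) (fun i hi => ?_)
  · interval_cases i <;> simp [openWindows]
  · have : ¬(i = 1 ∨ i = 2) := by omega
    simp [openWindows, this]

lemma validF_single_shiftedWindows : G3.ValidF 2 1 (FMap.single q₁ shiftedWindows) := by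
  refine validF_single (fun i hi hi2 => ?_) (fun i hi => ?_)
  · interval_cases i <;> simp [shiftedWindows]
  · have : i ≠ 2 := by omega
    simp [shiftedWindows, this]

lemma single_shiftedWindows_mem_FU : FMap.single q₁ shiftedWindows ∈ G3.FU 2 1 :=
  ⟨validF_single_shiftedWindows, q₁, by simp, by simp [shiftedWindows]⟩

lemma isSucc_single_openWindows (σ : G3.A) :
    G3.IsSucc 2 1 (FMap.single q₁ openWindows) σ (FMap.single q₁ shiftedWindows) := by
  have hloop : G3.Δ q₁ σ q₁ := by simp [G3]
  have hw : G3.w q₁ σ q₁ = 0 := rfl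
  refine ⟨validF_single_shiftedWindows, ⟨{q₁}, Or.inr rfl, ?_⟩, fun q hq j hj hj2 => ?_⟩
  · have hpost : q₁ ∈ G3.postSet σ {q₁} := ⟨q₁, rfl, hloop⟩
    rw [fsupp_single, fsupp_single, Set.inter_singleton_of_mem hpost]
  · rw [fsupp_single, Set.mem_singleton_iff] at hq
    subst hq
    rw [fval_single_self]
    interval_cases j
    · rw [zetaSet_single_one hloop, hw]
      exact succVal_singleton (by norm_num) le_rfl
    · rw [zetaSet_single_of_neg (by norm_num) hloop (by simp [openWindows]), hw]
      exact succVal_singleton (by simp [openWindows]) (by simp [openWindows])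

end G3

/-- Example 1: in the arena `G3` with `lmax = 2` and `W = 1`, the set
`upre(𝒰)` is not upward-closed: some `f ⪯ g` with `f ∈ upre(𝒰)` but `g ∉ upre(𝒰)`. -/
theorem upre_not_upward_closed :
    ∃ f g : WGA.FMap G3,
      G3.ValidF 2 1 f ∧ G3.ValidF 2 1 g ∧ G3.Preceq 2 f g ∧
      f ∈ G3.upreF 2 1 (G3.FU 2 1) ∧ g ∉ G3.upreF 2 1 (G3.FU 2 1) := by
  refine ⟨WGA.FMap.single G3.q₁ G3.openWindows, WGA.FMap.single G3.q₁ G3.shiftedWindows,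
    G3.validF_single_openWindows, G3.validF_single_shiftedWindows, ?_, ?_, ?_⟩
  · exact WGA.preceq_single_of_last_le fun i hi hi2 => by
      interval_cases i <;> simp [G3.openWindows, G3.shiftedWindows]
  · exact ⟨G3.validF_single_openWindows, fun σ =>
      ⟨_, G3.single_shiftedWindows_mem_FU, G3.isSucc_single_openWindows σ⟩⟩
  · refine WGA.notMem_upreF_FU le_rfl fun p hp => ?_
    rw [WGA.fsupp_single, Set.mem_singleton_iff] at hp
    simp [hp, G3.shiftedWindows]
end

section
/- Let G be a WGA with {q_I} ∈ Obs and lmax ≥ 1, and let 𝒩 be the nondeterministic Büchi automaton defined from G and lmax as in the context. Then for every play ψ = o_0σ_0o_1σ_1… of G (with o_0 = {q_I}), viewed as the infinite word (σ_0,o_1)(σ_1,o_2)… over Σ × Obs, 𝒩 accepts this word if and only if ψ ∉ Fix(0,lmax). -/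
open scoped Classical

namespace WGA

/-- States of the nondeterministic Büchi automaton 𝒩: a state of `G`, the length of the
currently tracked window (in `{1,…,lmax}`), and its (negative) running weight or `⊥`. -/
def NState (G : WGA) := G.Q × ℕ × Option ℤ

/-- The initial state `(q_I, 1, ⊥)` of 𝒩. -/
def NInit (G : WGA) : NState G := (G.qI, 1, none)

/-- The transition relation Δ'' of 𝒩: on letter `(σ,o)`, move from `(p,i,n)` to `(q,j,m)`
with `(p,σ,q) ∈ Δ`, `q ∈ o`, where `m = w(p,σ,q)` if `w(p,σ,q) < 0`;
`m = n + w(p,σ,q)` if `n ≠ ⊥`, `n + w(p,σ,q) < 0` and `i < lmax`; and `m = ⊥` otherwise;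
and `j = i + 1` if `m = n + w(p,σ,q)`, `j = 1` otherwise. -/
def NTrans (G : WGA) (lmax : ℕ) (s : NState G) (x : G.A × Set G.Q) (t : NState G) : Prop :=
  G.Δ s.1 x.1 t.1 ∧ t.1 ∈ x.2 ∧
  ((G.w s.1 x.1 t.1 < 0 ∧ t.2.2 = some (G.w s.1 x.1 t.1) ∧ t.2.1 = 1) ∨
   (∃ nv : ℤ, s.2.2 = some nv ∧ nv + G.w s.1 x.1 t.1 < 0 ∧ s.2.1 < lmax ∧
      t.2.2 = some (nv + G.w s.1 x.1 t.1) ∧ t.2.1 = s.2.1 + 1) ∨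
   (¬ G.w s.1 x.1 t.1 < 0 ∧
    (∀ nv : ℤ, s.2.2 = some nv → ¬ (nv + G.w s.1 x.1 t.1 < 0 ∧ s.2.1 < lmax)) ∧
    t.2.2 = none ∧ t.2.1 = 1))

/-- Büchi acceptance for 𝒩: some run visits accepting states `(q, lmax, n ≠ ⊥)`
infinitely often. -/
def NAccepts (G : WGA) (lmax : ℕ) (x : ℕ → G.A × Set G.Q) : Prop :=
  ∃ r : ℕ → NState G, r 0 = NInit G ∧
    (∀ i, NTrans G lmax (r i) (x i) (r (i + 1))) ∧
    ∀ N, ∃ k, N ≤ k ∧ (r k).2.1 = lmax ∧ (r k).2.2 ≠ none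

end WGA

/-!
A run of 𝒩 only ever stores the weight of a window, all of whose nonempty prefixes have
negative weight; an accepting state therefore witnesses a position with no good window of
length at most `lmax`, and infinitely many of them refute `Fix(0, lmax)`. Conversely, the
greedy run, which extends its current window whenever the transition relation allows it,
keeps tracking a window at least as long and at most as heavy as the one starting at any
bad position `p`; so it reaches an accepting state at the latest at `p + lmax`.
-/

namespace WGA

variable {G : WGA}

theorem winSum_zero (π : ℕ → G.Q) (act : ℕ → G.A) (s : ℕ) : G.winSum π act s 0 = 0 := by
  simp [winSum]

theorem winSum_one (π : ℕ → G.Q) (act : ℕ → G.A) (s : ℕ) :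
    G.winSum π act s 1 = G.w (π s) (act s) (π (s + 1)) := by
  simp [winSum]

theorem winSum_succ (π : ℕ → G.Q) (act : ℕ → G.A) (s j : ℕ) :
    G.winSum π act s (j + 1) =
      G.winSum π act s j + G.w (π (s + j)) (act (s + j)) (π (s + j + 1)) := by
  simp [winSum, Finset.sum_range_succ, Nat.add_assoc]

theorem not_GW_zero_iff {π : ℕ → G.Q} {act : ℕ → G.A} {i lmax : ℕ} :
    ¬ G.GW 0 i lmax π act ↔ ∀ j, 1 ≤ j → j ≤ lmax → G.winSum π act i j < 0 := by
  simp only [GW, not_exists, not_and]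
  refine forall_congr' fun j => forall_congr' fun hj => forall_congr' fun _ => ?_
  rw [le_div_iff₀ (by exact_mod_cast hj), zero_mul, Int.cast_nonneg_iff, not_le]

theorem eq_of_mem_Obs (G : WGA) {o₁ o₂ : Set G.Q} {q : G.Q} (h₁ : o₁ ∈ G.Obs)
    (h₂ : o₂ ∈ G.Obs) (hq₁ : q ∈ o₁) (hq₂ : q ∈ o₂) : o₁ = o₂ :=
  (G.obs_partition q).unique ⟨h₁, hq₁⟩ ⟨h₂, hq₂⟩

def IsRun (G : WGA) (lmax : ℕ) (x : ℕ → G.A × Set G.Q) (r : ℕ → NState G) : Prop :=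
  r 0 = NInit G ∧ ∀ i, NTrans G lmax (r i) (x i) (r (i + 1))

theorem nAccepts_iff {lmax : ℕ} {x : ℕ → G.A × Set G.Q} :
    NAccepts G lmax x ↔
      ∃ r, IsRun G lmax x r ∧ ∀ N, ∃ k, N ≤ k ∧ (r k).2.1 = lmax ∧ (r k).2.2 ≠ none := by
  simp only [NAccepts, IsRun, and_assoc]

namespace IsRun

variable {lmax : ℕ} {r : ℕ → NState G}

theorem concretizes {obs : ℕ → Set G.Q} {act : ℕ → G.A}
    (hr : IsRun G lmax (fun i => (act i, obs (i + 1))) r) (h0 : G.qI ∈ obs 0) :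
    G.Concretizes obs act fun i => (r i).1 := by
  refine ⟨fun i => ?_, fun i => (hr.2 i).1⟩
  cases i with
  | zero => show (r 0).1 ∈ obs 0; rw [hr.1]; exact h0
  | succ i => exact (hr.2 i).2.1

theorem window {x : ℕ → G.A × Set G.Q} (hr : IsRun G lmax x r) (k : ℕ) {v : ℤ}
    (hv : (r k).2.2 = some v) :
    ∃ s, s + (r k).2.1 = k ∧
      v = G.winSum (fun i => (r i).1) (fun i => (x i).1) s (r k).2.1 ∧
      ∀ j, 1 ≤ j → j ≤ (r k).2.1 → G.winSum (fun i => (r i).1) (fun i => (x i).1) s j < 0 := by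
  induction k generalizing v with
  | zero => simp [hr.1, NInit] at hv
  | succ k ih =>
    obtain ⟨-, -, ⟨hw, hv', hi⟩ | ⟨v₀, hv₀, hneg, -, hv', hi⟩ | ⟨-, -, hv', -⟩⟩ := hr.2 k
    · rw [hv, Option.some.injEq] at hv'
      refine ⟨k, by rw [hi], by rw [hi, winSum_one, hv'], fun j hj₁ hj₂ => ?_⟩
      obtain rfl : j = 1 := by omega
      rwa [winSum_one]
    · rw [hv, Option.some.injEq] at hv'
      obtain ⟨s, hs, hval, hpre⟩ := ih hv₀
      have hsum : G.winSum (fun i => (r i).1) (fun i => (x i).1) s ((r k).2.1 + 1) = v := by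
        rw [winSum_succ, ← hval, hs, hv']
      refine ⟨s, by omega, by rw [hi, hsum], fun j hj₁ hj₂ => ?_⟩
      rcases Nat.lt_or_ge j ((r k).2.1 + 1) with hj | hj
      · exact hpre j hj₁ (by omega)
      · obtain rfl : j = (r k).2.1 + 1 := by omega
        rw [hsum, hv']
        exact hneg
    · simp [hv] at hv'

end IsRun

/-- The counter `(i, ⊥)` stands for the empty window, of length 0 and weight 0, so that
restarting a window is extending the empty one. -/
def windowLength : ℕ × Option ℤ → ℕ
  | (i, some _) => i
  | (_, none) => 0

def greedyCounter (lmax : ℕ) (w : ℤ) : ℕ × Option ℤ → ℕ × Option ℤ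
  | (i, some v) =>
    if v + w < 0 ∧ i < lmax then (i + 1, some (v + w))
    else if w < 0 then (1, some w) else (1, none)
  | (_, none) => if w < 0 then (1, some w) else (1, none)

theorem greedyCounter_fst_le {lmax : ℕ} (hlmax : 1 ≤ lmax) (w : ℤ) (c : ℕ × Option ℤ) :
    (greedyCounter lmax w c).1 ≤ lmax := by
  rcases c with ⟨i, _ | v⟩ <;> simp only [greedyCounter] <;> split_ifs <;> omega

theorem greedyCounter_weight_nonpos (lmax : ℕ) (w : ℤ) (c : ℕ × Option ℤ) :
    (greedyCounter lmax w c).2.getD 0 ≤ 0 := by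
  rcases c with ⟨i, _ | v⟩ <;> simp only [greedyCounter] <;> split_ifs <;>
    simp only [Option.getD_some, Option.getD_none] <;> omega

theorem greedyCounter_of_extendable {lmax : ℕ} {w : ℤ} {c : ℕ × Option ℤ}
    (hlen : windowLength c < lmax) (hw : c.2.getD 0 + w < 0) :
    greedyCounter lmax w c = (windowLength c + 1, some (c.2.getD 0 + w)) := by
  rcases c with ⟨i, _ | v⟩
  · simp_all [greedyCounter, windowLength]
  · simp_all [greedyCounter, windowLength]

theorem nTrans_greedyCounter (G : WGA) (lmax : ℕ) {p q : G.Q} {a : G.A} {o : Set G.Q}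
    (c : ℕ × Option ℤ) (hΔ : G.Δ p a q) (hq : q ∈ o) :
    NTrans G lmax (p, c) (a, o) (q, greedyCounter lmax (G.w p a q) c) := by
  refine ⟨hΔ, hq, ?_⟩
  rcases c with ⟨i, _ | v⟩ <;> simp only [greedyCounter] <;> split_ifs <;> simp_all

def greedyCounters (G : WGA) (lmax : ℕ) (π : ℕ → G.Q) (act : ℕ → G.A) : ℕ → ℕ × Option ℤ
  | 0 => (1, none)
  | k + 1 => greedyCounter lmax (G.w (π k) (act k) (π (k + 1))) (greedyCounters G lmax π act k)

theorem isRun_greedyCounters {lmax : ℕ} {obs : ℕ → Set G.Q} {act : ℕ → G.A} {π : ℕ → G.Q}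
    (hπ0 : π 0 = G.qI) (hπ : G.Concretizes obs act π) :
    IsRun G lmax (fun i => (act i, obs (i + 1))) fun k => (π k, greedyCounters G lmax π act k) :=
  ⟨by show (π 0, (1, none)) = (G.qI, 1, none); rw [hπ0],
    fun k => nTrans_greedyCounter G lmax _ (hπ.2 k) (hπ.1 (k + 1))⟩

theorem greedyCounters_accepting_of_bad {lmax : ℕ} (hlmax : 1 ≤ lmax) {π : ℕ → G.Q}
    {act : ℕ → G.A} {p : ℕ} (hbad : ∀ j, 1 ≤ j → j ≤ lmax → G.winSum π act p j < 0) :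
    ∃ t, p ≤ t ∧ (greedyCounters G lmax π act t).1 = lmax ∧
      (greedyCounters G lmax π act t).2 ≠ none := by
  set c := greedyCounters G lmax π act with hc
  by_contra! hrej
  have hshort : ∀ t, p ≤ t → windowLength (c t) < lmax := by
    intro t ht
    have hle : (c t).1 ≤ lmax := by
      cases t with
      | zero => exact hlmax
      | succ t => exact greedyCounter_fst_le hlmax _ _
    have hrej' := hrej t ht
    rcases hct : c t with ⟨i, _ | v⟩
    · exact hlmax
    · rw [hct] at hle hrej'
      exact hle.lt_of_ne fun h => Option.some_ne_none v (hrej' h)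
  have hweight : (c p).2.getD 0 ≤ 0 := by
    cases p with
    | zero => simp [hc, greedyCounters]
    | succ p => exact greedyCounter_weight_nonpos _ _ _
  have htrack : ∀ j ≤ lmax,
      j ≤ windowLength (c (p + j)) ∧ (c (p + j)).2.getD 0 ≤ G.winSum π act p j := by
    intro j
    induction j with
    | zero => exact fun _ => ⟨Nat.zero_le _, by rwa [winSum_zero]⟩
    | succ j ih =>
      intro hj
      obtain ⟨hlen, hval⟩ := ih (by omega)
      have hsum := winSum_succ π act p j
      have hext : (c (p + j)).2.getD 0 + G.w (π (p + j)) (act (p + j)) (π (p + j + 1)) < 0 := by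
        linarith [hbad (j + 1) (by omega) hj]
      rw [← Nat.add_assoc, hc, greedyCounters, ← hc,
        greedyCounter_of_extendable (hshort _ (by omega)) hext]
      exact ⟨Nat.succ_le_succ hlen, show _ + _ ≤ _ by linarith⟩
  exact (htrack lmax le_rfl).1.not_gt (hshort _ (by omega))

end WGA

/-- Proposition 3: 𝒩 accepts a play `ψ` (viewed as the word
`(σ₀,o₁)(σ₁,o₂)…`) iff `ψ ∉ Fix(0,lmax)`. -/
theorem automaton_N_language (G : WGA) (lmax : ℕ) (hlmax : 1 ≤ lmax)
    (hqI : ({G.qI} : Set G.Q) ∈ G.Obs)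
    (obs : ℕ → Set G.Q) (act : ℕ → G.A) (hplay : G.IsPlay obs act) :
    WGA.NAccepts G lmax (fun i => (act i, obs (i + 1))) ↔ ¬ G.Fix 0 lmax obs act := by
  rw [WGA.nAccepts_iff]
  constructor
  · rintro ⟨r, hr, hacc⟩ hfix
    obtain ⟨N, hN⟩ := hfix _ (hr.concretizes hplay.2.1)
    obtain ⟨k, hk, hlen, hv⟩ := hacc (N + lmax)
    obtain ⟨v, hv⟩ := Option.ne_none_iff_exists'.1 hv
    obtain ⟨s, hs, -, hneg⟩ := hr.window k hv
    exact WGA.not_GW_zero_iff.2 (hlen ▸ hneg) (hN s (by omega))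
  · intro hfix
    simp only [WGA.Fix, not_forall, not_exists] at hfix
    obtain ⟨π, hπ, hbad⟩ := hfix
    have hobs0 : obs 0 = {G.qI} := G.eq_of_mem_Obs (hplay.1 0) hqI hplay.2.1 rfl
    have hπ0 : π 0 = G.qI := by simpa [hobs0] using hπ.1 0
    refine ⟨_, WGA.isRun_greedyCounters (lmax := lmax) hπ0 hπ, fun N => ?_⟩
    obtain ⟨p, hp, hpbad⟩ := hbad N
    obtain ⟨t, ht, hacc⟩ :=
      WGA.greedyCounters_accepting_of_bad hlmax (WGA.not_GW_zero_iff.1 hpbad)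
    exact ⟨t, hp.trans ht, hacc⟩
end

section
/- Let G be a WGA and lmax ≥ 1. For a play ψ and π ∈ γ(ψ), say that π merges with infinitely many violating paths if for all i ≥ 0 there exist j ≥ i, k ≥ j + lmax and χ ∈ γ(ψ[..k]) such that π and χ visit the same state at position k (π[k] = χ[k]) and χ ∉ GW(0,j,lmax). Then for every play ψ ∈ plays(G): there exists π ∈ γ(ψ) merging with infinitely many violating paths if and only if ψ ∉ UFix(0,lmax). -/
/- Whether a window `j` is good depends only on the first `j + lmax` positions, so splicing a
prefix that violates window `j` into a concretization at a state they share yields a concretization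
that violates window `j`. For the converse, the sets `V i k` of states reached at time `k` by prefixes
violating some window `j ≥ i` shrink as `i` grows; as the arena is finite, from some level `i₀` on
they agree with `V i₀ k` for infinitely many `k`. A concretization violating a window `j₀ ≥ i₀`
(given by `¬ UFix`) lies in `V i₀ k` for all large `k`, hence in `V i k` infinitely often, for
every `i`. -/

open scoped Classical

theorem Finset.exists_frequently_eq_of_antitone {α : Type*} [Fintype α]
    (L : ℕ → ℕ → Finset α) (hL : ∀ k, Antitone (L · k)) :
    ∃ i₀, ∀ i, i₀ ≤ i → ∃ᶠ k in Filter.atTop, L i k = L i₀ k := by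
  by_contra! hshrink
  have hdrop : ∀ n, ∃ i, ∀ᶠ k in Filter.atTop, (L i k).card + n ≤ (L 0 k).card := by
    intro n
    induction n with
    | zero => exact ⟨0, by simp⟩
    | succ n ih =>
      obtain ⟨i, hi⟩ := ih
      obtain ⟨i', hii', hne⟩ := hshrink i
      refine ⟨i', (hi.and hne).mono fun k ⟨hk, hne⟩ => ?_⟩
      have : (L i' k).card < (L i k).card := Finset.card_lt_card ((hL k hii').ssubset_of_ne hne)
      omega
  obtain ⟨i, hi⟩ := hdrop (Fintype.card α + 1)
  obtain ⟨k, hk⟩ := hi.exists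
  have := (L 0 k).card_le_univ
  omega

namespace WGA

variable (G : WGA)

def ConcretizesUpTo (obs : ℕ → Set G.Q) (act : ℕ → G.A) (k : ℕ) (χ : ℕ → G.Q) : Prop :=
  (∀ m, m ≤ k → χ m ∈ obs m) ∧ ∀ m, m < k → G.Δ (χ m) (act m) (χ (m + 1))

variable {G}

theorem ConcretizesUpTo.splice {obs : ℕ → Set G.Q} {act : ℕ → G.A} {k : ℕ} {χ π : ℕ → G.Q}
    (hχ : G.ConcretizesUpTo obs act k χ) (hπ : G.Concretizes obs act π) (hk : χ k = π k) :
    G.Concretizes obs act fun m => if m ≤ k then χ m else π m := by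
  refine ⟨fun m => ?_, fun m => ?_⟩
  · dsimp only
    split_ifs with hm
    exacts [hχ.1 m hm, hπ.1 m]
  · dsimp only
    rcases lt_trichotomy m k with hm | rfl | hm
    · rw [if_pos hm.le, if_pos (Nat.succ_le_of_lt hm)]
      exact hχ.2 m hm
    · rw [if_pos le_rfl, if_neg (by omega), hk]
      exact hπ.2 m
    · rw [if_neg (by omega), if_neg (by omega)]
      exact hπ.2 m

theorem winSum_congr {π₁ π₂ : ℕ → G.Q} {act : ℕ → G.A} {i l : ℕ}
    (h : ∀ m, m ≤ i + l → π₁ m = π₂ m) :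
    G.winSum π₁ act i l = G.winSum π₂ act i l :=
  Finset.sum_congr rfl fun t ht => by
    have := Finset.mem_range.mp ht
    rw [h (i + t) (by omega), h (i + t + 1) (by omega)]

theorem GW_congr {ν : ℚ} {i lmax : ℕ} {π₁ π₂ : ℕ → G.Q} {act : ℕ → G.A}
    (h : ∀ m, m ≤ i + lmax → π₁ m = π₂ m) :
    G.GW ν i lmax π₁ act ↔ G.GW ν i lmax π₂ act := by
  refine exists_congr fun l => and_congr_right fun hl => and_congr_right fun hll => ?_
  rw [winSum_congr fun m hm => h m (by omega)]

variable (G)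

noncomputable def violatingStates (lmax : ℕ) (obs : ℕ → Set G.Q) (act : ℕ → G.A) (i k : ℕ) :
    Finset G.Q :=
  Finset.univ.filter fun q => ∃ j, i ≤ j ∧ j + lmax ≤ k ∧
    ∃ χ : ℕ → G.Q, G.ConcretizesUpTo obs act k χ ∧ χ k = q ∧ ¬ G.GW 0 j lmax χ act

variable {G}

theorem mem_violatingStates {lmax : ℕ} {obs : ℕ → Set G.Q} {act : ℕ → G.A} {i k : ℕ} {q : G.Q} :
    q ∈ G.violatingStates lmax obs act i k ↔ ∃ j, i ≤ j ∧ j + lmax ≤ k ∧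
      ∃ χ : ℕ → G.Q, G.ConcretizesUpTo obs act k χ ∧ χ k = q ∧ ¬ G.GW 0 j lmax χ act := by
  simp [violatingStates]

theorem violatingStates_antitone (lmax : ℕ) (obs : ℕ → Set G.Q) (act : ℕ → G.A) (k : ℕ) :
    Antitone (G.violatingStates lmax obs act · k) := by
  intro i i' hii' q hq
  obtain ⟨j, hij, hrest⟩ := mem_violatingStates.mp hq
  exact mem_violatingStates.mpr ⟨j, hii'.trans hij, hrest⟩

theorem Concretizes.mem_violatingStates_of_not_GW {lmax : ℕ} {obs : ℕ → Set G.Q} {act : ℕ → G.A}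
    {ρ : ℕ → G.Q} (hρ : G.Concretizes obs act ρ) {i j k : ℕ} (hij : i ≤ j)
    (hjk : j + lmax ≤ k) (hρj : ¬ G.GW 0 j lmax ρ act) :
    ρ k ∈ G.violatingStates lmax obs act i k :=
  mem_violatingStates.mpr ⟨j, hij, hjk, ρ, ⟨fun m _ => hρ.1 m, fun m _ => hρ.2 m⟩, rfl, hρj⟩

theorem not_UFix_of_merging {lmax : ℕ} {obs : ℕ → Set G.Q} {act : ℕ → G.A} {π : ℕ → G.Q}
    (hπ : G.Concretizes obs act π)
    (hmerge : ∀ i, ∃ k, π k ∈ G.violatingStates lmax obs act i k) :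
    ¬ G.UFix 0 lmax obs act := by
  rintro ⟨i, hi⟩
  obtain ⟨k, hk⟩ := hmerge i
  obtain ⟨j, hij, hjk, χ, hχ, hχk, hχj⟩ := mem_violatingStates.mp hk
  have hagree : ∀ m, m ≤ j + lmax → (if m ≤ k then χ m else π m) = χ m := fun m hm => by
    simp [hm.trans hjk]
  exact hχj ((GW_congr hagree).mp (hi _ (hχ.splice hπ hχk) j hij))

theorem exists_merging_of_not_UFix {lmax : ℕ} {obs : ℕ → Set G.Q} {act : ℕ → G.A}
    (h : ¬ G.UFix 0 lmax obs act) :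
    ∃ π, G.Concretizes obs act π ∧ ∀ i, ∃ k, π k ∈ G.violatingStates lmax obs act i k := by
  obtain ⟨i₀, hstable⟩ := Finset.exists_frequently_eq_of_antitone _
    (violatingStates_antitone lmax obs act)
  simp only [UFix, not_exists, not_forall] at h
  obtain ⟨ρ, hρ, j₀, hij₀, hρj₀⟩ := h i₀
  refine ⟨ρ, hρ, fun i => ?_⟩
  obtain ⟨k, hk, hjk⟩ := ((hstable (max i i₀) (le_max_right i i₀)).and_eventually
    (Filter.eventually_ge_atTop (j₀ + lmax))).exists
  refine ⟨k, violatingStates_antitone lmax obs act k (le_max_left i i₀) ?_⟩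
  show ρ k ∈ G.violatingStates lmax obs act (max i i₀) k
  rw [hk]
  exact hρ.mem_violatingStates_of_not_GW hij₀ hjk hρj₀

end WGA

theorem merging_iff_not_ufix_general (G : WGA) (lmax : ℕ)
    (obs : ℕ → Set G.Q) (act : ℕ → G.A) :
    (∃ π, G.Concretizes obs act π ∧
      ∀ i : ℕ, ∃ j k : ℕ, i ≤ j ∧ j + lmax ≤ k ∧
        ∃ χ : ℕ → G.Q,
          (∀ m, m ≤ k → χ m ∈ obs m) ∧
          (∀ m, m < k → G.Δ (χ m) (act m) (χ (m + 1))) ∧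
          χ k = π k ∧ ¬ G.GW 0 j lmax χ act) ↔
    ¬ G.UFix 0 lmax obs act := by
  have hmem : ∀ π : ℕ → G.Q, ∀ i, (∃ k, π k ∈ G.violatingStates lmax obs act i k) ↔
      ∃ j k, i ≤ j ∧ j + lmax ≤ k ∧ ∃ χ : ℕ → G.Q, (∀ m, m ≤ k → χ m ∈ obs m) ∧
        (∀ m, m < k → G.Δ (χ m) (act m) (χ (m + 1))) ∧ χ k = π k ∧ ¬ G.GW 0 j lmax χ act := by
    intro π i
    simp only [WGA.mem_violatingStates, WGA.ConcretizesUpTo, and_assoc]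
    exact exists_comm
  simp only [← hmem]
  exact ⟨fun ⟨π, hπ, hmerge⟩ => WGA.not_UFix_of_merging hπ hmerge, WGA.exists_merging_of_not_UFix⟩

/-- Lemma 10: a play `ψ` has a concretization merging with infinitely many
violating paths iff `ψ ∉ UFix(0,lmax)`. -/
theorem merging_iff_not_ufix (G : WGA) (lmax : ℕ) (hlmax : 1 ≤ lmax)
    (obs : ℕ → Set G.Q) (act : ℕ → G.A) (hplay : G.IsPlay obs act) :
    (∃ π, G.Concretizes obs act π ∧
      ∀ i : ℕ, ∃ j k : ℕ, i ≤ j ∧ j + lmax ≤ k ∧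
        ∃ χ : ℕ → G.Q,
          (∀ m, m ≤ k → χ m ∈ obs m) ∧
          (∀ m, m < k → G.Δ (χ m) (act m) (χ (m + 1))) ∧
          χ k = π k ∧ ¬ G.GW 0 j lmax χ act) ↔
    ¬ G.UFix 0 lmax obs act :=
  merging_iff_not_ufix_general G lmax obs act
end
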